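/- Let A be a p-torsion abelian group such that A ⊗ ℤ/p and Tor(A, ℤ/p) are both finite. Then A is isomorphic to a finite direct sum of cyclic groups ℤ/p^k (for various k ≥ 1) and Prüfer groups ℤ(p^∞). -/

import Mathlib

open TensorProduct

/-- The Prüfer `p`-group, realized as the `p`-primary torsion subgroup of `ℚ/ℤ`. -/
noncomputable def Prufer (p : ℕ) [Fact p.Prime] : AddSubgroup (ℚ ⧸ AddSubgroup.zmultiples (1 : ℚ)) :=
  AddCommGroup.primaryComponent _ p

section Aux

/-- The multiplication-by-`n` homomorphism. -/
def nsmulHom (G : Type) [AddCommGroup G] (n : ℕ) : G →+ G :=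
  AddMonoidHom.mk' (fun a => n • a) (fun a b => smul_add n a b)

@[simp] lemma nsmulHom_apply (G : Type) [AddCommGroup G] (n : ℕ) (a : G) :
    nsmulHom G n a = n • a := rfl

lemma aux_fin (G : Type) [AddCommGroup G] (p : ℕ)
    (hfin : Finite {a : G // p • a = 0}) :
    ∀ n : ℕ, Finite {a : G // p ^ n • a = 0} := by
  intro n
  induction n with
  | zero =>
      have : Subsingleton {a : G // p ^ 0 • a = 0} := by
        constructor
        rintro ⟨a, ha⟩ ⟨b, hb⟩
        simp only [pow_zero, one_smul] at ha hb
        simp [ha, hb]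
      exact Finite.of_subsingleton
  | succ n ih =>
      classical
      set g : G → G := fun b =>
        if h : ∃ c : G, p ^ (n+1) • c = 0 ∧ p • c = b then h.choose else 0 with hg
      have key : ∀ a : G, p ^ (n+1) • a = 0 → p • g (p • a) = p • a := by
        intro a ha
        have h : ∃ c : G, p ^ (n+1) • c = 0 ∧ p • c = p • a := ⟨a, ha, rfl⟩
        rw [hg]
        simp only [dif_pos h]
        exact h.choose_spec.2
      have hinj : Function.Injective (fun a : {a : G // p ^ (n+1) • a = 0} =>
          ((⟨a.1 - g (p • a.1), by rw [smul_sub, key a.1 a.2, sub_self]⟩ :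
              {x : G // p • x = 0}),
           (⟨p • a.1, by rw [smul_smul, ← pow_succ, a.2]⟩ : {x : G // p ^ n • x = 0}))) := by
        rintro ⟨a, ha⟩ ⟨b, hb⟩ hab
        simp only [Prod.mk.injEq, Subtype.mk.injEq] at hab
        obtain ⟨h1, h2⟩ := hab
        apply Subtype.ext
        have h3 : a - g (p • a) = b - g (p • a) := by rw [h1, h2]
        exact sub_left_inj.mp h3
      exact Finite.of_injective _ hinj

lemma aux_surj (G : Type) [AddCommGroup G] (p : ℕ) (hp : p.Prime)
    (htor : ∀ g : G, ∃ n : ℕ, p ^ n • g = 0)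
    (hdiv : ∀ g : G, ∃ g', p • g' = g) :
    ∀ {n : ℤ}, n ≠ 0 → Function.Surjective (fun g : G => n • g) := by
  have hpk : ∀ (k : ℕ) (g : G), ∃ g', p ^ k • g' = g := by
    intro k
    induction k with
    | zero => intro g; exact ⟨g, by simp⟩
    | succ k ih =>
        intro g
        obtain ⟨h, hh⟩ := hdiv g
        obtain ⟨g', hg'⟩ := ih h
        refine ⟨g', ?_⟩
        rw [pow_succ, mul_comm, mul_smul, hg', hh]
  have hu : ∀ (u : ℕ), ¬ p ∣ u → ∀ g : G, ∃ g', u • g' = g := by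
    intro u hdvd g
    obtain ⟨e, he⟩ := htor g
    have hco : IsCoprime (u : ℤ) ((p : ℤ) ^ e) := by
      apply IsCoprime.pow_right
      rw [Int.isCoprime_iff_gcd_eq_one]
      simpa using (Nat.coprime_comm.mp ((Nat.Prime.coprime_iff_not_dvd hp).mpr hdvd))
    obtain ⟨x, y, hxy⟩ := hco
    refine ⟨x • g, ?_⟩
    have hpe : ((p : ℤ)) ^ e • g = 0 := by
      rw [show ((p : ℤ)) ^ e = ((p ^ e : ℕ) : ℤ) by push_cast; ring, natCast_zsmul, he]
    have h1 : (u : ℤ) • (x • g) = g := by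
      rw [smul_smul]
      have hux : (u : ℤ) * x = 1 - y * (p : ℤ) ^ e := by linarith
      rw [hux, sub_smul, one_smul, mul_smul, hpe, smul_zero, sub_zero]
    calc u • (x • g) = (u : ℤ) • (x • g) := (natCast_zsmul _ _).symm
      _ = g := h1
  intro n hn g
  have hm : n.natAbs ≠ 0 := Int.natAbs_ne_zero.mpr hn
  have hmk : p ^ (n.natAbs.factorization p) * (n.natAbs / p ^ (n.natAbs.factorization p))
      = n.natAbs := Nat.ordProj_mul_ordCompl_eq_self n.natAbs p
  have hud : ¬ p ∣ (n.natAbs / p ^ (n.natAbs.factorization p)) := Nat.not_dvd_ordCompl hp hm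
  obtain ⟨g₁, hg₁⟩ := hu _ hud g
  obtain ⟨g₂, hg₂⟩ := hpk (n.natAbs.factorization p) g₁
  have hmg : n.natAbs • g₂ = g := by rw [← hmk, mul_comm, mul_smul, hg₂, hg₁]
  rcases Int.natAbs_eq n with h | h
  · exact ⟨g₂, by simp only; rw [h, natCast_zsmul, hmg]⟩
  · refine ⟨-g₂, ?_⟩
    simp only
    rw [h, neg_smul, smul_neg, neg_neg, natCast_zsmul, hmg]

lemma aux_exp (G : Type) [AddCommGroup G] (p M : ℕ)
    (htor : ∀ g : G, ∃ n : ℕ, p ^ n • g = 0)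
    (h : ∀ x : G, p • x = 0 → (∃ y : G, p ^ M • y = x) → x = 0) :
    ∀ g : G, p ^ M • g = 0 := by
  have key : ∀ (n : ℕ) (g : G), p ^ n • (p ^ M • g) = 0 → p ^ M • g = 0 := by
    intro n
    induction n with
    | zero => intro g hg; simpa using hg
    | succ n ih =>
        intro g hg
        have hz : p • (p ^ n • (p ^ M • g)) = 0 := by
          rw [smul_smul, ← pow_succ']
          exact hg
        have h2 : ∃ y : G, p ^ M • y = p ^ n • (p ^ M • g) :=
          ⟨p ^ n • g, by rw [smul_smul, smul_smul, mul_comm]⟩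
        exact ih g (h _ hz h2)
  intro g
  obtain ⟨n, hn⟩ := htor (p ^ M • g)
  exact key n g hn

lemma aux_gen (Q : Type) [AddCommGroup Q] (p : ℕ) (E : AddSubgroup Q)
    (hdiv : ∀ e ∈ E, ∃ e' ∈ E, p • e' = e)
    (hsoc : ∀ q : Q, p • q = 0 → q ∈ E)
    (htor : ∀ q : Q, ∃ n : ℕ, p ^ n • q = 0) : ∀ q : Q, q ∈ E := by
  have key : ∀ (n : ℕ) (q : Q), p ^ n • q = 0 → q ∈ E := by
    intro n
    induction n with
    | zero => intro q hq; simp only [pow_zero, one_smul] at hq; rw [hq]; exact E.zero_mem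
    | succ n ih =>
        intro q hq
        have h1 : p ^ n • (p • q) = 0 := by rw [smul_smul, ← pow_succ]; exact hq
        obtain ⟨e', he', hpe'⟩ := hdiv (p • q) (ih _ h1)
        have h2 : q - e' ∈ E := hsoc _ (by rw [smul_sub, hpe', sub_self])
        have : q = (q - e') + e' := by abel
        rw [this]
        exact E.add_mem h2 he'
  intro q
  obtain ⟨n, hn⟩ := htor q
  exact key n q hn

lemma aux_inj {G H : Type} [AddCommGroup G] [AddCommGroup H] (p : ℕ)
    (htor : ∀ g : G, ∃ n : ℕ, p ^ n • g = 0) (f : G →+ H)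
    (h : ∀ g : G, p • g = 0 → f g = 0 → g = 0) : Function.Injective f := by
  rw [injective_iff_map_eq_zero]
  have key : ∀ (n : ℕ) (g : G), p ^ n • g = 0 → f g = 0 → g = 0 := by
    intro n
    induction n with
    | zero => intro g hg _; simpa using hg
    | succ n ih =>
        intro g hg hfg
        have h1 : p ^ n • (p • g) = 0 := by rw [smul_smul, ← pow_succ]; exact hg
        have h2 : f (p • g) = 0 := by rw [map_nsmul, hfg, smul_zero]
        exact h g (ih _ h1 h2) hfg
  intro g hg
  obtain ⟨n, hn⟩ := htor g
  exact key n g hn hg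

lemma aux_ext (G : Type) [AddCommGroup G] (S : AddSubgroup G) (Q : Type) [AddCommGroup Q]
    [DivisibleBy Q ℤ] (f : ↥S →+ Q) : ∃ F : G →+ Q, ∀ s : ↥S, F s = f s := by
  haveI : CategoryTheory.Injective (AddCommGrpCat.of Q) := AddCommGrpCat.injective_of_divisible Q
  let ι : AddCommGrpCat.of ↥S ⟶ AddCommGrpCat.of G := AddCommGrpCat.ofHom S.subtype
  haveI : CategoryTheory.Mono ι := (AddCommGrpCat.mono_iff_injective ι).mpr Subtype.val_injective
  refine ⟨(CategoryTheory.Injective.factorThru (AddCommGrpCat.ofHom f) ι).hom, fun s => ?_⟩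
  have h := CategoryTheory.Injective.comp_factorThru (AddCommGrpCat.ofHom f) ι
  exact CategoryTheory.ConcreteCategory.congr_hom h s

/-- Dropping subsingleton factors from a product. -/
noncomputable def auxDrop {ι : Type} (F : ι → Type) [∀ i, AddCommGroup (F i)]
    (pred : ι → Prop) (htriv : ∀ i, ¬ pred i → Subsingleton (F i)) :
    (∀ i, F i) ≃+ (∀ j : {i // pred i}, F j.1) := by
  classical
  exact
  { toFun := fun g j => g j.1
    invFun := fun h i => if hc : pred i then h ⟨i, hc⟩ else 0
    left_inv := fun g => funext fun i => by
      by_cases hc : pred i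
      · simp [hc]
      · haveI := htriv i hc
        exact Subsingleton.elim _ _
    right_inv := fun h => funext fun j => by simp [j.2]
    map_add' := fun _ _ => rfl }

/-- Reindexing a product along an equivalence. -/
def auxReindex {ι κ : Type} (t : κ ≃ ι) (F : ι → Type) [∀ i, AddCommGroup (F i)] :
    (∀ i, F i) ≃+ (∀ k, F (t k)) :=
  { Equiv.piCongrLeft' F t.symm with map_add' := fun _ _ => rfl }

end Aux

section Pruf
variable (p : ℕ) [Fact p.Prime]

lemma mem_prufer_iff (x : ℚ ⧸ AddSubgroup.zmultiples (1 : ℚ)) :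
    x ∈ Prufer p ↔ ∃ n : ℕ, p ^ n • x = 0 := by
  constructor
  · rintro ⟨n, hn⟩
    exact ⟨n, hn⟩
  · rintro ⟨n, hn⟩
    obtain ⟨m, _, hm⟩ := (Nat.dvd_prime_pow Fact.out).mp (addOrderOf_dvd_of_nsmul_eq_zero hn)
    exact ⟨m, by rw [← hm]; exact addOrderOf_nsmul_eq_zero x⟩

lemma prufer_tor : ∀ x : ↥(Prufer p), ∃ n : ℕ, p ^ n • x = 0 := by
  rintro ⟨x, hx⟩
  obtain ⟨n, hn⟩ := (mem_prufer_iff p x).mp hx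
  exact ⟨n, Subtype.ext hn⟩

lemma prufer_div : ∀ x : ↥(Prufer p), ∃ y : ↥(Prufer p), p • y = x := by
  rintro ⟨x, hx⟩
  obtain ⟨t, rfl⟩ := QuotientAddGroup.mk_surjective x
  obtain ⟨n, hn⟩ := (mem_prufer_iff p _).mp hx
  have hp0 : (p : ℚ) ≠ 0 := Nat.cast_ne_zero.mpr (Fact.out : p.Prime).ne_zero
  have hdiv : p • (QuotientAddGroup.mk (t / p) : ℚ ⧸ AddSubgroup.zmultiples (1 : ℚ))
      = QuotientAddGroup.mk t := by
    rw [← QuotientAddGroup.mk_nsmul]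
    congr 1
    rw [nsmul_eq_mul]
    field_simp
  refine ⟨⟨QuotientAddGroup.mk (t / p), ?_⟩, Subtype.ext hdiv⟩
  rw [mem_prufer_iff]
  refine ⟨n + 1, ?_⟩
  rw [pow_succ, mul_smul, hdiv, hn]

lemma eps0_smul : p • (QuotientAddGroup.mk ((p : ℚ)⁻¹) : ℚ ⧸ AddSubgroup.zmultiples (1 : ℚ)) = 0 := by
  have hp0 : (p : ℚ) ≠ 0 := Nat.cast_ne_zero.mpr (Fact.out : p.Prime).ne_zero
  rw [← QuotientAddGroup.mk_nsmul, QuotientAddGroup.eq_zero_iff, nsmul_eq_mul,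
    mul_inv_cancel₀ hp0]
  exact AddSubgroup.mem_zmultiples 1

lemma eps0_ne : (QuotientAddGroup.mk ((p : ℚ)⁻¹) : ℚ ⧸ AddSubgroup.zmultiples (1 : ℚ)) ≠ 0 := by
  have hp1 : 1 < p := (Fact.out : p.Prime).one_lt
  have hp0 : (p : ℚ) ≠ 0 := Nat.cast_ne_zero.mpr (Fact.out : p.Prime).ne_zero
  rw [Ne, QuotientAddGroup.eq_zero_iff, AddSubgroup.mem_zmultiples_iff]
  rintro ⟨k, hk⟩
  have hk' : (k : ℚ) = (p : ℚ)⁻¹ := by simpa using hk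
  have h2 : (k * p : ℤ) = 1 := by
    have : (k : ℚ) * p = 1 := by rw [hk', inv_mul_cancel₀ hp0]
    exact_mod_cast this
  have hdvd : (p : ℤ) ∣ 1 := ⟨k, by linarith⟩
  have := Int.le_of_dvd one_pos hdvd
  omega
lemma eps0_ord : addOrderOf (QuotientAddGroup.mk ((p : ℚ)⁻¹) :
    ℚ ⧸ AddSubgroup.zmultiples (1 : ℚ)) = p := by
  have h1 := addOrderOf_dvd_of_nsmul_eq_zero (eps0_smul p)
  rcases (Fact.out : p.Prime).eq_one_or_self_of_dvd _ h1 with h | h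
  · exact absurd (AddMonoid.addOrderOf_eq_one_iff.mp h) (eps0_ne p)
  · exact h

/-- A generator of the socle of the Prüfer group. -/
noncomputable def pruferEps : ↥(Prufer p) :=
  ⟨QuotientAddGroup.mk ((p : ℚ)⁻¹), by
    rw [mem_prufer_iff]
    exact ⟨1, by rw [pow_one]; exact eps0_smul p⟩⟩

lemma pruferEps_smul : p • pruferEps p = 0 := Subtype.ext (eps0_smul p)

/-- The inclusion of `ZMod p` as the socle of the Prüfer group. -/
noncomputable def pruferChi : ZMod p →+ ↥(Prufer p) :=
  ZMod.lift p ⟨zmultiplesHom _ (pruferEps p), by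
    simp only [zmultiplesHom_apply, natCast_zsmul]
    exact pruferEps_smul p⟩

lemma pruferChi_int (z : ℤ) : pruferChi p (z : ZMod p) = z • pruferEps p := by
  rw [pruferChi, ZMod.lift_coe]
  rfl

lemma pruferChi_inj : Function.Injective (pruferChi p) := by
  haveI : NeZero p := ⟨(Fact.out : p.Prime).ne_zero⟩
  rw [injective_iff_map_eq_zero]
  intro w hw
  have hwv : ((w.val : ℕ) : ZMod p) = w := ZMod.natCast_rightInverse w
  have h0 : (w.val : ℕ) • pruferEps p = 0 := by
    have h := pruferChi_int p (w.val : ℤ)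
    rw [show ((w.val : ℤ) : ZMod p) = ((w.val : ℕ) : ZMod p) by push_cast; rfl, hwv, hw] at h
    rw [← natCast_zsmul]
    exact h.symm
  have h0' : (w.val : ℕ) • (pruferEps p : ℚ ⧸ AddSubgroup.zmultiples (1 : ℚ)) = 0 :=
    congrArg Subtype.val h0
  have hdvd : p ∣ w.val := by
    have h := addOrderOf_dvd_of_nsmul_eq_zero h0'
    rw [show ((pruferEps p : ↥(Prufer p)) : ℚ ⧸ AddSubgroup.zmultiples (1 : ℚ))
      = QuotientAddGroup.mk ((p : ℚ)⁻¹) from rfl] at h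
    rwa [eps0_ord p] at h
  have hlt : w.val < p := ZMod.val_lt w
  rw [← hwv, Nat.eq_zero_of_dvd_of_lt hdvd hlt]
  exact Nat.cast_zero

lemma pruferChi_socle (y : ↥(Prufer p)) (hy : p • y = 0) : ∃ w : ZMod p, pruferChi p w = y := by
  have hp0 : (p : ℚ) ≠ 0 := Nat.cast_ne_zero.mpr (Fact.out : p.Prime).ne_zero
  obtain ⟨t, ht⟩ := QuotientAddGroup.mk_surjective (y : ℚ ⧸ AddSubgroup.zmultiples (1 : ℚ))
  have hyt : p • (y : ℚ ⧸ AddSubgroup.zmultiples (1 : ℚ)) = 0 := congrArg Subtype.val hy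
  rw [← ht, ← QuotientAddGroup.mk_nsmul, QuotientAddGroup.eq_zero_iff,
    AddSubgroup.mem_zmultiples_iff] at hyt
  obtain ⟨c, hc⟩ := hyt
  have hc' : (c : ℚ) = p * t := by
    rw [nsmul_eq_mul] at hc
    simpa using hc
  refine ⟨(c : ZMod p), ?_⟩
  rw [pruferChi_int]
  apply Subtype.ext
  show c • (QuotientAddGroup.mk ((p : ℚ)⁻¹) : ℚ ⧸ AddSubgroup.zmultiples (1 : ℚ))
      = (y : ℚ ⧸ AddSubgroup.zmultiples (1 : ℚ))
  rw [← ht, ← QuotientAddGroup.mk_zsmul]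
  congr 1
  rw [zsmul_eq_mul, hc']
  field_simp [mul_comm]

end Pruf


/-- A p-torsion abelian group with finite `A ⊗ ℤ/p` and finite p-torsion subgroup
`Tor(A, ℤ/p) = {a : A | p • a = 0}` is a finite direct sum of cyclic p-groups and
Prüfer p-groups. -/
theorem stmt_0 (p : ℕ) [Fact p.Prime] (A : Type) [AddCommGroup A]
    (htor : ∀ a : A, ∃ n : ℕ, (p ^ n : ℕ) • a = 0)
    (hfin1 : Finite (A ⊗[ℤ] ZMod p))
    (hfin2 : Finite {a : A // (p : ℕ) • a = 0}) :
    ∃ (m r : ℕ) (k : Fin m → ℕ), (∀ i, 1 ≤ k i) ∧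
      Nonempty (A ≃+ ((∀ i : Fin m, ZMod (p ^ k i)) × (Fin r → Prufer p))) := by
  classical
  have hp : p.Prime := Fact.out
  set T : AddSubgroup A := (nsmulHom A p).ker with hT
  set Pn : ℕ → AddSubgroup A := fun n => (nsmulHom A (p ^ n)).range with hPn
  have hTmem : ∀ x : A, x ∈ T ↔ p • x = 0 := fun x => Iff.rfl
  have hPmem : ∀ (n : ℕ) (x : A), x ∈ Pn n ↔ ∃ y, p ^ n • y = x := fun n x =>
    AddMonoidHom.mem_range
  have hPle : ∀ {a b : ℕ}, a ≤ b → Pn b ≤ Pn a := by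
    intro a b hab x hx
    obtain ⟨y, hy⟩ := (hPmem b x).mp hx
    refine (hPmem a x).mpr ⟨p ^ (b - a) • y, ?_⟩
    rw [smul_smul, ← pow_add]
    rw [show a + (b - a) = b by omega]
    exact hy
  set C : ℕ → AddSubgroup A := fun n => Pn n ⊓ T with hC
  have hCfin : ∀ n, Finite ↥(C n) := by
    intro n
    apply Finite.of_injective (fun x : ↥(C n) =>
      (⟨x.1, (hTmem x.1).mp x.2.2⟩ : {a : A // p • a = 0}))
    intro x y hxy
    simp only [Subtype.mk.injEq] at hxy
    exact Subtype.ext hxy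
  obtain ⟨N, hN⟩ : ∃ N, Nat.card ↥(C N) = sInf (Set.range fun n => Nat.card ↥(C n)) := by
    obtain ⟨N, hN⟩ := Nat.sInf_mem (Set.range_nonempty (fun n => Nat.card ↥(C n)))
    exact ⟨N, hN⟩
  have hstab : ∀ n, N ≤ n → C n = C N := by
    intro n hn
    have hle : C n ≤ C N := inf_le_inf_right T (hPle hn)
    haveI := hCfin N
    haveI := hCfin n
    have h1 : Nat.card ↥(C n) ≤ Nat.card ↥(C N) :=
      Nat.card_le_card_of_injective _ (AddSubgroup.inclusion_injective hle)
    have h2 : sInf (Set.range fun n => Nat.card ↥(C n)) ≤ Nat.card ↥(C n) :=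
      Nat.sInf_le ⟨n, rfl⟩
    have hcard : Nat.card ↥(C n) = Nat.card ↥(C N) := by omega
    have hbij : Function.Bijective (AddSubgroup.inclusion hle) :=
      (Nat.bijective_iff_injective_and_card _).mpr
        ⟨AddSubgroup.inclusion_injective hle, hcard⟩
    apply le_antisymm hle
    intro x hx
    obtain ⟨y, hy⟩ := hbij.2 ⟨x, hx⟩
    have hyx : (y : A) = x := congrArg Subtype.val hy
    rw [← hyx]
    exact y.2
  set D : AddSubgroup A := ⨅ n, Pn n with hD
  have hDle : ∀ n, D ≤ Pn n := fun n => iInf_le _ n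
  have hDmem : ∀ x : A, x ∈ D ↔ ∀ n, x ∈ Pn n := by
    intro x
    rw [hD]
    exact AddSubgroup.mem_iInf
  have hCN_D : C N ≤ D := by
    intro x hx
    rw [hDmem]
    intro n
    have hx' : x ∈ C (max n N) := by rw [hstab (max n N) (le_max_right _ _)]; exact hx
    exact hPle (le_max_left n N) hx'.1
  have hDdiv : ∀ x : ↥D, ∃ y : ↥D, p • y = x := by
    rintro ⟨x, hx⟩
    obtain ⟨a, ha⟩ := (hPmem (N+1) x).mp (hDle (N+1) hx)
    have hd'N : p ^ N • a ∈ Pn N := (hPmem N _).mpr ⟨a, rfl⟩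
    have hd'D : p ^ N • a ∈ D := by
      rw [hDmem]
      intro n
      rcases le_or_gt n N with h | h
      · exact hPle h hd'N
      · have hn : N ≤ n := le_of_lt h
        obtain ⟨b, hb⟩ := (hPmem (n+1) x).mp (hDle (n+1) hx)
        have hw1 : p • (p ^ N • a - p ^ n • b) = 0 := by
          rw [smul_sub, smul_smul, smul_smul, ← pow_succ', ← pow_succ', ha, hb, sub_self]
        have hw2 : p ^ N • a - p ^ n • b ∈ Pn N :=
          (Pn N).sub_mem hd'N (hPle hn ((hPmem n _).mpr ⟨b, rfl⟩))
        have hwC : p ^ N • a - p ^ n • b ∈ C N :=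
          AddSubgroup.mem_inf.mpr ⟨hw2, (hTmem _).mpr hw1⟩
        have heq : p ^ N • a = (p ^ N • a - p ^ n • b) + p ^ n • b := by abel
        rw [heq]
        exact (Pn n).add_mem ((hDmem _).mp (hCN_D hwC) n) ((hPmem n _).mpr ⟨b, rfl⟩)
    refine ⟨⟨p ^ N • a, hd'D⟩, ?_⟩
    apply Subtype.ext
    show p • p ^ N • a = x
    rw [smul_smul, ← pow_succ', ha]
  have hDtor : ∀ x : ↥D, ∃ n : ℕ, p ^ n • x = 0 := by
    rintro ⟨x, hx⟩
    obtain ⟨n, hn⟩ := htor x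
    exact ⟨n, Subtype.ext hn⟩
  haveI : DivisibleBy ↥D ℤ := divisibleByOfSMulRightSurj _ _ (aux_surj ↥D p hp hDtor hDdiv)
  obtain ⟨π, hπ⟩ := aux_ext A D ↥D (AddMonoidHom.id ↥D)
  simp only [AddMonoidHom.id_apply] at hπ
  set B : AddSubgroup A := π.ker with hB
  have hBmem : ∀ x : A, x ∈ B ↔ π x = 0 := fun x => Iff.rfl
  have hDB : ∀ x : A, x ∈ D → x ∈ B → x = 0 := by
    intro x hxD hxB
    have h1 : π x = ⟨x, hxD⟩ := hπ ⟨x, hxD⟩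
    have h2 : π x = 0 := (hBmem x).mp hxB
    rw [h1] at h2
    exact congrArg Subtype.val h2
  have hBtor : ∀ x : ↥B, ∃ n : ℕ, p ^ n • x = 0 := by
    rintro ⟨x, hx⟩
    obtain ⟨n, hn⟩ := htor x
    exact ⟨n, Subtype.ext hn⟩
  have hBexp : ∀ x : ↥B, p ^ N • x = 0 := by
    apply aux_exp ↥B p N hBtor
    rintro ⟨x, hxB⟩ h1 ⟨⟨y, hyB⟩, hy⟩
    have h1' : p • x = 0 := congrArg Subtype.val h1
    have hy' : p ^ N • y = x := congrArg Subtype.val hy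
    have hxC : x ∈ C N := AddSubgroup.mem_inf.mpr ⟨(hPmem N x).mpr ⟨y, hy'⟩, (hTmem x).mpr h1'⟩
    exact Subtype.ext (hDB x (hCN_D hxC) hxB)
  haveI hBfin : Finite ↥B := by
    haveI := aux_fin A p hfin2 N
    apply Finite.of_injective (fun x : ↥B =>
      (⟨x.1, congrArg Subtype.val (hBexp x)⟩ : {a : A // p ^ N • a = 0}))
    intro x y hxy
    simp only [Subtype.mk.injEq] at hxy
    exact Subtype.ext hxy
  have hkermem : ∀ a : A, a - ↑(π a) ∈ B := by
    intro a
    refine (hBmem _).mpr ?_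
    rw [map_sub, hπ (π a), sub_self]
  let eA : A ≃+ ↥D × ↥B :=
  { toFun := fun a => (π a, ⟨a - ↑(π a), hkermem a⟩)
    invFun := fun x => ((x.1 : A) + (x.2 : A) : A)
    left_inv := fun a => by
      show ↑(π a) + (a - ↑(π a)) = a
      abel
    right_inv := fun x => by
      have hb : π (x.2 : A) = 0 := (hBmem _).mp x.2.2
      have h1 : π ((x.1 : A) + (x.2 : A)) = x.1 := by rw [map_add, hπ x.1, hb, add_zero]
      refine Prod.ext h1 (Subtype.ext ?_)
      show ((x.1 : A) + (x.2 : A)) - ↑(π ((x.1 : A) + (x.2 : A))) = (x.2 : A)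
      rw [h1]
      abel
    map_add' := fun a b => by
      refine Prod.ext (map_add π a b) (Subtype.ext ?_)
      show (a + b) - ↑(π (a + b)) = (a - ↑(π a)) + (b - ↑(π b))
      rw [map_add, AddSubgroup.coe_add]
      abel }
  -- the divisible part
  set SG : AddSubgroup ↥D := (nsmulHom ↥D p).ker with hSG
  have hSGmem : ∀ x : ↥D, x ∈ SG ↔ p • x = 0 := fun x => Iff.rfl
  haveI hSGfin : Finite ↥SG := by
    apply Finite.of_injective (fun x : ↥SG => (⟨(x.1 : A),
      congrArg Subtype.val ((hSGmem x.1).mp x.2)⟩ : {a : A // p • a = 0}))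
    intro x y hxy
    simp only [Subtype.mk.injEq] at hxy
    exact Subtype.ext (Subtype.ext hxy)
  haveI : Module (ZMod p) ↥SG := AddCommGroup.zmodModule (by
    intro x
    exact Subtype.ext ((hSGmem x.1).mp x.2))
  haveI : Module.Finite (ZMod p) ↥SG := Module.Finite.of_finite
  set r := Module.finrank (ZMod p) ↥SG with hr
  let σ : ↥SG ≃+ (Fin r → ZMod p) := (Module.finBasis (ZMod p) ↥SG).equivFun.toAddEquiv
  haveI : DivisibleBy ↥(Prufer p) ℤ :=
    divisibleByOfSMulRightSurj _ _ (aux_surj _ p hp (prufer_tor p) (prufer_div p))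
  let Φ : (Fin r → ZMod p) →+ (Fin r → ↥(Prufer p)) :=
    AddMonoidHom.mk' (fun v i => pruferChi p (v i))
      (fun v w => funext fun i => by simp [map_add])
  have hΦinj : Function.Injective Φ := fun v w h =>
    funext fun i => pruferChi_inj p (congrFun h i)
  let ψ : ↥SG →+ (Fin r → ↥(Prufer p)) := Φ.comp σ.toAddMonoidHom
  have hψinj : Function.Injective ψ := fun x y hxy => σ.injective (hΦinj hxy)
  obtain ⟨φ, hφ⟩ := aux_ext ↥D SG (Fin r → ↥(Prufer p)) ψ
  have hφinj : Function.Injective φ := by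
    apply aux_inj p hDtor φ
    intro g hg hfg
    have hgS : g ∈ SG := (hSGmem g).mpr hg
    have h1 : ψ ⟨g, hgS⟩ = 0 := by rw [← hφ ⟨g, hgS⟩]; exact hfg
    have h2 : (⟨g, hgS⟩ : ↥SG) = 0 := hψinj (by rw [h1, map_zero])
    exact congrArg Subtype.val h2
  have hφtor : ∀ q : Fin r → ↥(Prufer p), ∃ n : ℕ, p ^ n • q = 0 := by
    intro q
    have h := fun i => prufer_tor p (q i)
    choose n hn using h
    refine ⟨Finset.univ.sup n, ?_⟩
    funext i
    show p ^ (Finset.univ.sup n) • q i = 0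
    have hle : n i ≤ Finset.univ.sup n := Finset.le_sup (Finset.mem_univ i)
    rw [show Finset.univ.sup n = (Finset.univ.sup n - n i) + n i by omega, pow_add,
      mul_smul, hn i, smul_zero]
  have hφsurj : Function.Surjective φ := by
    have hall := aux_gen (Fin r → ↥(Prufer p)) p φ.range ?_ ?_ hφtor
    · intro y
      obtain ⟨x, hx⟩ := hall y
      exact ⟨x, hx⟩
    · rintro e ⟨x, rfl⟩
      obtain ⟨y, hy⟩ := hDdiv x
      exact ⟨φ y, ⟨y, rfl⟩, by rw [← map_nsmul, hy]⟩
    · intro q hq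
      have hcomp : ∀ i, ∃ w : ZMod p, pruferChi p w = q i := by
        intro i
        apply pruferChi_socle
        exact congrFun hq i
      choose w hw using hcomp
      obtain ⟨s, hs⟩ := σ.surjective w
      refine ⟨(s : ↥D), ?_⟩
      rw [hφ s]
      show Φ (σ s) = q
      rw [hs]
      exact funext hw
  let eD : ↥D ≃+ (Fin r → ↥(Prufer p)) := AddEquiv.ofBijective φ ⟨hφinj, hφsurj⟩
  -- the finite part
  obtain ⟨ι, fι, qf, hq, e, ⟨f⟩⟩ := AddCommGroup.equiv_directSum_zmod_of_finite ↥B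
  haveI := fι
  have hqp : ∀ i : ι, e i ≠ 0 → qf i = p := by
    intro i hi
    haveI : NeZero (qf i ^ e i) := ⟨pow_ne_zero _ (hq i).ne_zero⟩
    set x : ↥B := f.symm (DirectSum.of (fun j => ZMod (qf j ^ e j)) i 1) with hx
    have hord : addOrderOf x = qf i ^ e i := by
      have h1 : addOrderOf x = addOrderOf (DirectSum.of (fun j => ZMod (qf j ^ e j)) i 1) := by
        rw [hx]
        exact addOrderOf_injective f.symm.toAddMonoidHom f.symm.injective _
      have h2 : addOrderOf (DirectSum.of (fun j => ZMod (qf j ^ e j)) i 1)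
          = addOrderOf (1 : ZMod (qf i ^ e i)) :=
        addOrderOf_injective (DirectSum.of (fun j => ZMod (qf j ^ e j)) i)
          (DirectSum.of_injective i) _
      rw [h1, h2, ZMod.addOrderOf_one]
    obtain ⟨n, hn⟩ := hBtor x
    have hdvd : qf i ^ e i ∣ p ^ n := by
      rw [← hord]
      exact addOrderOf_dvd_of_nsmul_eq_zero hn
    have h1 : qf i ∣ p ^ n := dvd_trans (dvd_pow_self (qf i) hi) hdvd
    have h2 : qf i ∣ p := (Nat.Prime.dvd_of_dvd_pow (hq i)) h1
    exact (Nat.prime_dvd_prime_iff_eq (hq i) hp).mp h2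
  have htriv : ∀ i : ι, ¬ (e i ≠ 0) → Subsingleton (ZMod (qf i ^ e i)) := by
    intro i hi
    rw [not_not] at hi
    rw [hi, pow_zero]
    infer_instance
  set m := Fintype.card {i : ι // e i ≠ 0} with hm
  let t : Fin m ≃ {i : ι // e i ≠ 0} := (Fintype.equivFin {i : ι // e i ≠ 0}).symm
  set k : Fin m → ℕ := fun j => e (t j).1 with hk
  have hk1 : ∀ j, 1 ≤ k j := fun j => Nat.one_le_iff_ne_zero.mpr (t j).2
  let e2 := auxDrop (fun i : ι => ZMod (qf i ^ e i)) (fun i => e i ≠ 0) htriv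
  let e3 := auxReindex t (fun j : {i : ι // e i ≠ 0} => ZMod (qf j.1 ^ e j.1))
  let e4 : (∀ j : Fin m, ZMod (qf (t j).1 ^ e (t j).1)) ≃+ (∀ j : Fin m, ZMod (p ^ k j)) :=
    AddEquiv.piCongrRight fun j =>
      (ZMod.ringEquivCongr (by rw [hqp (t j).1 (t j).2])).toAddEquiv
  let eB : ↥B ≃+ (∀ j : Fin m, ZMod (p ^ k j)) :=
    f.trans ((DirectSum.addEquivProd _).trans (e2.trans (e3.trans e4)))
  refine ⟨m, r, k, hk1, ⟨?_⟩⟩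
  exact eA.trans ((eD.prodCongr eB).trans AddEquiv.prodComm)
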